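/- In Ũ with B_i = F_i + E_{τi}K̃_i', assume τ is an involution of the Cartan matrix with c_{i,τi} = 0 whenever τi ≠ i. If i ≠ τi, j ∉ {i, τi}, and c_{ij} = −1, then the undeformed quantum Serre relation B_i²B_j − (v+v^{-1})B_iB_jB_i + B_jB_i² = 0 holds. -/

import Mathlib

noncomputable section

open scoped TensorProduct

/-- The base field `ℚ(v)`. -/
abbrev kk : Type := RatFunc ℚ

/-- The indeterminate `v`. -/
noncomputable def v : kk := RatFunc.X

/-- Quantum integer `[n] = (v^n - v^{-n})/(v - v^{-1})`. -/
noncomputable def qInt (n : ℕ) : kk := (v ^ (n : ℤ) - v ^ (-(n : ℤ))) / (v - v⁻¹)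

/-- Quantum factorial. -/
noncomputable def qFact : ℕ → kk
  | 0 => 1
  | n + 1 => qFact n * qInt (n + 1)

/-- Quantum binomial coefficient. -/
noncomputable def qBinom (m r : ℕ) : kk := qFact m / (qFact r * qFact (m - r))

/-- Generators of the quantum group `Ũ` with doubled Cartan part. -/
inductive Gen (I : Type) : Type
  | E : I → Gen I
  | F : I → Gen I
  | K : I → Gen I
  | K' : I → Gen I
  | Ki : I → Gen I
  | K'i : I → Gen I

variable {I : Type} [Fintype I] [DecidableEq I]

/-- Canonical generators inside the free algebra. -/
noncomputable def gg (x : Gen I) : FreeAlgebra kk (Gen I) := FreeAlgebra.ι kk x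

/-- Defining relations of `Ũ` attached to the symmetric GCM `c`. -/
inductive URel (c : I → I → ℤ) : FreeAlgebra kk (Gen I) → FreeAlgebra kk (Gen I) → Prop
  | KKi (i : I) : URel c (gg (Gen.K i) * gg (Gen.Ki i)) 1
  | KiK (i : I) : URel c (gg (Gen.Ki i) * gg (Gen.K i)) 1
  | K'K'i (i : I) : URel c (gg (Gen.K' i) * gg (Gen.K'i i)) 1
  | K'iK' (i : I) : URel c (gg (Gen.K'i i) * gg (Gen.K' i)) 1
  | KK (i j : I) : URel c (gg (Gen.K i) * gg (Gen.K j)) (gg (Gen.K j) * gg (Gen.K i))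
  | KKp (i j : I) : URel c (gg (Gen.K i) * gg (Gen.K' j)) (gg (Gen.K' j) * gg (Gen.K i))
  | KpKp (i j : I) : URel c (gg (Gen.K' i) * gg (Gen.K' j)) (gg (Gen.K' j) * gg (Gen.K' i))
  | EF (i j : I) : URel c (gg (Gen.E i) * gg (Gen.F j) - gg (Gen.F j) * gg (Gen.E i))
      (if i = j then ((v - v⁻¹)⁻¹) • (gg (Gen.K i) - gg (Gen.K' i)) else 0)
  | KE (i j : I) :
      URel c (gg (Gen.K i) * gg (Gen.E j)) ((v ^ (c i j)) • (gg (Gen.E j) * gg (Gen.K i)))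
  | KF (i j : I) :
      URel c (gg (Gen.K i) * gg (Gen.F j)) ((v ^ (-(c i j))) • (gg (Gen.F j) * gg (Gen.K i)))
  | KpE (i j : I) :
      URel c (gg (Gen.K' i) * gg (Gen.E j)) ((v ^ (-(c i j))) • (gg (Gen.E j) * gg (Gen.K' i)))
  | KpF (i j : I) :
      URel c (gg (Gen.K' i) * gg (Gen.F j)) ((v ^ (c i j)) • (gg (Gen.F j) * gg (Gen.K' i)))
  | serreE (i j : I) (hij : i ≠ j) :
      URel c (∑ r ∈ Finset.range ((1 - c i j).toNat + 1),
        ((-1 : kk) ^ r * qBinom (1 - c i j).toNat r) •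
          (gg (Gen.E i) ^ r * gg (Gen.E j) * gg (Gen.E i) ^ ((1 - c i j).toNat - r))) 0
  | serreF (i j : I) (hij : i ≠ j) :
      URel c (∑ r ∈ Finset.range ((1 - c i j).toNat + 1),
        ((-1 : kk) ^ r * qBinom (1 - c i j).toNat r) •
          (gg (Gen.F i) ^ r * gg (Gen.F j) * gg (Gen.F i) ^ ((1 - c i j).toNat - r))) 0

/-- The quantum group `Ũ` with doubled Cartan part, presented by generators and relations. -/
abbrev Utilde (c : I → I → ℤ) : Type := RingQuot (URel c)

noncomputable def UE (c : I → I → ℤ) (i : I) : Utilde c :=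
  RingQuot.mkAlgHom kk (URel c) (gg (Gen.E i))
noncomputable def UF (c : I → I → ℤ) (i : I) : Utilde c :=
  RingQuot.mkAlgHom kk (URel c) (gg (Gen.F i))
noncomputable def UK (c : I → I → ℤ) (i : I) : Utilde c :=
  RingQuot.mkAlgHom kk (URel c) (gg (Gen.K i))
noncomputable def UK' (c : I → I → ℤ) (i : I) : Utilde c :=
  RingQuot.mkAlgHom kk (URel c) (gg (Gen.K' i))
noncomputable def UKi (c : I → I → ℤ) (i : I) : Utilde c :=
  RingQuot.mkAlgHom kk (URel c) (gg (Gen.Ki i))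
noncomputable def UK'i (c : I → I → ℤ) (i : I) : Utilde c :=
  RingQuot.mkAlgHom kk (URel c) (gg (Gen.K'i i))

/-- `B_i = F_i + E_{τi} K̃_i'`. -/
noncomputable def iB (c : I → I → ℤ) (τ : I → I) (i : I) : Utilde c :=
  UF c i + UE c (τ i) * UK' c i

/-- `k̃_i = K̃_i K̃_{τi}'`. -/
noncomputable def ik (c : I → I → ℤ) (τ : I → I) (i : I) : Utilde c :=
  UK c i * UK' c (τ i)

/-- The inverse of `k̃_i`. -/
noncomputable def ikinv (c : I → I → ℤ) (τ : I → I) (i : I) : Utilde c :=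
  UKi c i * UK'i c (τ i)

/-- The `ı`quantum group `Ũ^ı`, the subalgebra of `Ũ` generated by the `B_i` and `k̃_i^{±1}`. -/
noncomputable def Uiota (c : I → I → ℤ) (τ : I → I) : Subalgebra kk (Utilde c) :=
  Algebra.adjoin kk (Set.range (iB c τ) ∪ Set.range (ik c τ) ∪ Set.range (ikinv c τ))

/-!
Write `B_i = x_i + y_i` with `x_i = F_i` and `y_i = E_{τi} K̃_i'`. The `x`'s satisfy the Serre
relation of `Ũ`, and so do the `y`'s: moving the `K̃'` factors to the right multiplies every
monomial by the same power of `v`, leaving the `E`-Serre relation for `τi, τj`. Since `τi ∉ {i, j}`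
and `τj ≠ i`, the `y`'s `v`-commute with the `x`'s (`y_i x_i = v² x_i y_i`,
`y_i x_j = v⁻¹ x_j y_i`, `y_j x_i = v⁻¹ x_i y_j`), and with these exponents the mixed terms of
the Serre expression of `x + y` cancel in four groups.
-/

def IsQSerre {K A : Type*} [Field K] [Ring A] [Algebra K A] (q : K) (a b : A) : Prop :=
  a * a * b - (q + q⁻¹) • (a * b * a) + b * (a * a) = 0

theorem mul_left_comm_of_mul_eq_smul {R A : Type*} [CommSemiring R] [Semiring A] [Algebra R A]
    {a b : A} {s : R} (h : a * b = s • (b * a)) (t : A) : a * (b * t) = s • (b * (a * t)) := by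
  rw [← mul_assoc, h, smul_mul_assoc, mul_assoc]

namespace IsQSerre

variable {K A : Type*} [Field K] [Ring A] [Algebra K A] {q : K}

theorem mul_right {p : K} {a b k l : A} (h : IsQSerre q a b) (hkl : Commute l k)
    (hka : Commute k a) (hkb : k * b = p • (b * k)) (hla : l * a = p • (a * l)) :
    IsQSerre q (a * k) (b * l) := by
  have hfactor : a * k * (a * k) * (b * l) - (q + q⁻¹) • (a * k * (b * l) * (a * k))
      + b * l * (a * k * (a * k)) = p ^ 2 • ((a * a * b - (q + q⁻¹) • (a * b * a)
      + b * (a * a)) * (k * (k * l))) := by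
    simp only [mul_assoc, sub_mul, add_mul, smul_mul_assoc, smul_add, smul_sub,
      hka.left_comm, hkl.left_comm, hkl.eq, mul_left_comm_of_mul_eq_smul hkb,
      mul_left_comm_of_mul_eq_smul hla, mul_smul_comm, smul_smul]
    module
  unfold IsQSerre at h ⊢
  rw [hfactor, h, zero_mul, smul_zero]

theorem add {a b x y : A} (hq : q ≠ 0) (hab : IsQSerre q a b) (hxy : IsQSerre q x y)
    (hxa : x * a = q ^ 2 • (a * x)) (hxb : x * b = q⁻¹ • (b * x))
    (hya : y * a = q⁻¹ • (a * y)) : IsQSerre q (a + x) (b + y) := by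
  have hmix₁ : a * x * b + x * a * b - (q + q⁻¹) • (a * b * x + x * b * a)
      + (b * a * x + b * x * a) = 0 := by
    simp only [mul_assoc, hxa, hxb, smul_add, smul_mul_assoc, mul_smul_comm, smul_smul]
    match_scalars <;> field_simp <;> ring
  have hmix₂ : a * a * y - (q + q⁻¹) • (a * y * a) + y * (a * a) = 0 := by
    simp only [mul_assoc, mul_left_comm_of_mul_eq_smul hya, hya, mul_smul_comm, smul_smul]
    match_scalars
    field_simp
    ring
  have hmix₃ : x * x * b - (q + q⁻¹) • (x * b * x) + b * (x * x) = 0 := by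
    simp only [mul_assoc, mul_left_comm_of_mul_eq_smul hxb, hxb, smul_mul_assoc,
      mul_smul_comm, smul_smul]
    match_scalars
    field_simp
    ring
  have hmix₄ : a * x * y + x * a * y - (q + q⁻¹) • (a * y * x + x * y * a)
      + (y * a * x + y * x * a) = 0 := by
    simp only [mul_assoc, mul_left_comm_of_mul_eq_smul hxa, mul_left_comm_of_mul_eq_smul hya,
      hxa, hya, smul_add, smul_mul_assoc, mul_smul_comm, smul_smul]
    match_scalars <;> field_simp <;> ring
  unfold IsQSerre at hab hxy ⊢
  linear_combination (norm := skip) hab + hxy + hmix₁ + hmix₂ + hmix₃ + hmix₄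
  simp only [add_mul, mul_add, smul_add, mul_assoc]
  abel

end IsQSerre

theorem v_ne_zero : v ≠ 0 := RatFunc.X_ne_zero

theorem v_sq_add_ne_zero (a : ℚ) : v ^ 2 + (a : kk) ≠ 0 := fun h =>
  RatFunc.transcendental_X ⟨Polynomial.X ^ 2 + Polynomial.C a,
    Polynomial.X_pow_add_C_ne_zero two_pos a, by simpa [v, RatFunc.algebraMap_eq_C] using h⟩

theorem v_sub_inv_ne_zero : v - v⁻¹ ≠ 0 := by
  have h := v_sq_add_ne_zero (-1)
  contrapose! h
  field_simp [v_ne_zero] at h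
  push_cast
  linear_combination h

theorem v_add_inv_ne_zero : v + v⁻¹ ≠ 0 := by
  have h := v_sq_add_ne_zero 1
  contrapose! h
  field_simp [v_ne_zero] at h
  push_cast
  linear_combination h

theorem qInt_one : qInt 1 = 1 := by
  simp [qInt, div_self v_sub_inv_ne_zero]

theorem qInt_two : qInt 2 = v + v⁻¹ := by
  rw [qInt, div_eq_iff v_sub_inv_ne_zero, Nat.cast_ofNat, zpow_neg, zpow_ofNat]
  field_simp
  ring

theorem qFact_two : qFact 2 = v + v⁻¹ := by
  simp [qFact, qInt_one, qInt_two]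

theorem qBinom_two_zero : qBinom 2 0 = 1 := by
  simp only [qBinom, Nat.sub_zero, qFact_two]
  simp [qFact, v_add_inv_ne_zero]

theorem qBinom_two_one : qBinom 2 1 = v + v⁻¹ := by
  simp only [qBinom, Nat.reduceSub, qFact_two]
  simp [qFact, qInt_one]

theorem qBinom_two_two : qBinom 2 2 = 1 := by
  simp only [qBinom, Nat.sub_self, qFact_two]
  simp [qFact, v_add_inv_ne_zero]

theorem isQSerre_of_sum_eq_zero {A : Type*} [Ring A] [Algebra kk A] {a b : A}
    (h : ∑ r ∈ Finset.range 3, ((-1 : kk) ^ r * qBinom 2 r) • (a ^ r * b * a ^ (2 - r)) = 0) :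
    IsQSerre v a b := by
  simp only [Finset.sum_range_succ, Finset.sum_range_zero, qBinom_two_zero, qBinom_two_one,
    qBinom_two_two, pow_zero, pow_one, pow_two, neg_one_mul, neg_neg, mul_one, one_mul,
    zero_add, neg_smul, one_smul, Nat.sub_zero, Nat.sub_self, Nat.reduceSub] at h
  unfold IsQSerre
  linear_combination (norm := skip) h
  simp only [mul_assoc]
  abel

section Relations

variable {ι : Type} [DecidableEq ι] (c : ι → ι → ℤ)

theorem UK'_commute (i j : ι) : Commute (UK' c i) (UK' c j) := by
  simpa only [UK', map_mul, commute_iff_eq] using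
    RingQuot.mkAlgHom_rel kk (URel.KpKp (c := c) i j)

theorem UK'_mul_UE (i j : ι) : UK' c i * UE c j = v ^ (-c i j) • (UE c j * UK' c i) := by
  simpa only [UK', UE, map_mul, map_smul] using RingQuot.mkAlgHom_rel kk (URel.KpE (c := c) i j)

theorem UK'_mul_UF (i j : ι) : UK' c i * UF c j = v ^ c i j • (UF c j * UK' c i) := by
  simpa only [UK', UF, map_mul, map_smul] using RingQuot.mkAlgHom_rel kk (URel.KpF (c := c) i j)

theorem UE_commute_UF {i j : ι} (h : i ≠ j) : Commute (UE c i) (UF c j) := by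
  have := RingQuot.mkAlgHom_rel kk (URel.EF (c := c) i j)
  rw [if_neg h, map_sub, map_zero, sub_eq_zero] at this
  simpa only [UE, UF, map_mul, commute_iff_eq] using this

theorem UE_mul_UK'_mul_UF {e b : ι} (a : ι) (h : e ≠ b) :
    UE c e * UK' c a * UF c b = v ^ c a b • (UF c b * (UE c e * UK' c a)) := by
  rw [mul_assoc, UK'_mul_UF, mul_smul_comm, ← mul_assoc, (UE_commute_UF c h).eq, mul_assoc]

theorem isQSerre_UE {i j : ι} (hij : i ≠ j) (h : c i j = -1) :
    IsQSerre v (UE c i) (UE c j) := by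
  have := RingQuot.mkAlgHom_rel kk (URel.serreE (c := c) i j hij)
  rw [h] at this
  simp only [map_sum, map_smul, map_mul, map_pow, map_zero] at this
  exact isQSerre_of_sum_eq_zero this

theorem isQSerre_UF {i j : ι} (hij : i ≠ j) (h : c i j = -1) :
    IsQSerre v (UF c i) (UF c j) := by
  have := RingQuot.mkAlgHom_rel kk (URel.serreF (c := c) i j hij)
  rw [h] at this
  simp only [map_sum, map_smul, map_mul, map_pow, map_zero] at this
  exact isQSerre_of_sum_eq_zero this

end Relations

theorem undeformed_serre_general (c : I → I → ℤ)
    (hsymm : ∀ i j, c i j = c j i) (hdiag : ∀ i, c i i = 2)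
    (τ : I → I) (hτ : ∀ i, τ (τ i) = i) (hcτ : ∀ i j, c (τ i) (τ j) = c i j)
    (hsplit : ∀ i, τ i ≠ i → c i (τ i) = 0)
    (i j : I) (hne : i ≠ τ i) (hji : j ≠ i) (hjτ : j ≠ τ i) (hij : c i j = -1) :
    iB c τ i * iB c τ i * iB c τ j
      - (v + v⁻¹) • (iB c τ i * iB c τ j * iB c τ i)
      + iB c τ j * (iB c τ i * iB c τ i) = 0 := by
  have hτi : τ i ≠ i := hne.symm
  have hτj : τ j ≠ i := fun h => hjτ (by rw [← h, hτ])
  have hτij : τ i ≠ τ j := fun h => hji (by rw [← hτ j, ← h, hτ])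
  have hc : c j (τ i) = c i (τ j) := by rw [← hcτ, hτ, hsymm]
  have hE : IsQSerre v (UE c (τ i) * UK' c i) (UE c (τ j) * UK' c j) :=
    (isQSerre_UE c hτij (by rw [hcτ, hij])).mul_right (UK'_commute c j i)
      (by simpa [hsplit i hτi, commute_iff_eq] using UK'_mul_UE c i (τ i)) (UK'_mul_UE c i (τ j))
      (by rw [UK'_mul_UE, hc])
  exact (isQSerre_UF c hji.symm hij).add v_ne_zero hE
    (by simpa [hdiag] using UE_mul_UK'_mul_UF c i hτi)
    (by simpa [hij] using UE_mul_UK'_mul_UF c i hjτ.symm)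
    (by simpa [hsymm j i, hij] using UE_mul_UK'_mul_UF c j hτj)

/-- In `Ũ`, with `τ` an involution of the Cartan matrix satisfying `c_{i,τi} = 0`
whenever `τi ≠ i`: if `i ≠ τi`, `j ∉ {i, τi}` and `c_{ij} = −1`, then the undeformed
quantum Serre relation `B_i²B_j − (v+v^{-1})B_iB_jB_i + B_jB_i² = 0` holds. -/
theorem undeformed_serre (c : I → I → ℤ)
    (hsymm : ∀ i j, c i j = c j i) (hdiag : ∀ i, c i i = 2)
    (hoff : ∀ i j, i ≠ j → c i j ≤ 0)
    (τ : I → I) (hτ : ∀ i, τ (τ i) = i) (hcτ : ∀ i j, c (τ i) (τ j) = c i j)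
    (hsplit : ∀ i, τ i ≠ i → c i (τ i) = 0)
    (i j : I) (hne : i ≠ τ i) (hji : j ≠ i) (hjτ : j ≠ τ i) (hij : c i j = -1) :
    iB c τ i * iB c τ i * iB c τ j
      - (v + v⁻¹) • (iB c τ i * iB c τ j * iB c τ i)
      + iB c τ j * (iB c τ i * iB c τ i) = 0 :=
  undeformed_serre_general c hsymm hdiag τ hτ hcτ hsplit i j hne hji hjτ hij
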